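/- σ_S² ≤ σ_TSLS²; that is, the asymptotic variance of the S estimator of Ansel, Hong and Li (2018) is weakly smaller than the asymptotic variance of the TSLS estimator with covariates and strata fixed effects. -/

import Mathlib

open MeasureTheory ProbabilityTheory Finset

noncomputable section

/-- Population data for a covariate-adaptive randomization (CAR) design:
potential outcomes `Y1, Y0`, potential treatment take-ups `D1, D0` (valued in `{0,1}`),
covariates `X`, stratum `S`, and target assignment probabilities `piS`. -/
structure CARPop (Ω : Type*) [MeasurableSpace Ω] (𝒮 : Type*) [MeasurableSpace 𝒮]
    (d : ℕ) where
  P : Measure Ω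
  Y1 : Ω → ℝ
  Y0 : Ω → ℝ
  D1 : Ω → ℝ
  D0 : Ω → ℝ
  X : Ω → Fin d → ℝ
  S : Ω → 𝒮
  piS : 𝒮 → ℝ

namespace CARPop

variable {Ω : Type*} [MeasurableSpace Ω] {𝒮 : Type*} [MeasurableSpace 𝒮] {d : ℕ}

/-- Potential treatment take-up `D(a)`, with `a : Bool` (`true` = assigned to treatment). -/
def Da (c : CARPop Ω 𝒮 d) (a : Bool) : Ω → ℝ := if a then c.D1 else c.D0

/-- `Y(D(a)) = Y(1)·D(a) + Y(0)·(1 − D(a))`. -/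
def Ya (c : CARPop Ω 𝒮 d) (a : Bool) : Ω → ℝ :=
  fun ω => c.Y1 ω * c.Da a ω + c.Y0 ω * (1 - c.Da a ω)

/-- `W = Y(D(1))`. -/
def W (c : CARPop Ω 𝒮 d) : Ω → ℝ := c.Ya true

/-- `Z = Y(D(0))`. -/
def Z (c : CARPop Ω 𝒮 d) : Ω → ℝ := c.Ya false

/-- The compliers event `{D(1) > D(0)}`. -/
def compliers (c : CARPop Ω 𝒮 d) : Set Ω := {ω | c.D0 ω < c.D1 ω}

/-- The LATE `τ = E[Y(1) − Y(0) | D(1) > D(0)]`. -/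
def tau (c : CARPop Ω 𝒮 d) : ℝ :=
  (∫ ω in c.compliers, (c.Y1 ω - c.Y0 ω) ∂c.P) / (c.P c.compliers).toReal

/-- The stratum event `{S = s}`. -/
def stratum (c : CARPop Ω 𝒮 d) (s : 𝒮) : Set Ω := {ω | c.S ω = s}

/-- Conditional expectation given `S = s`: `E[f | S = s]`. -/
def cEs (c : CARPop Ω 𝒮 d) (s : 𝒮) (f : Ω → ℝ) : ℝ :=
  (∫ ω in c.stratum s, f ω ∂c.P) / (c.P (c.stratum s)).toReal

/-- Conditional expectation given `S`, i.e. `E[f | S]` as the function `ω ↦ E[f | S = S ω]`. -/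
def cES (c : CARPop Ω 𝒮 d) (f : Ω → ℝ) : Ω → ℝ := fun ω => c.cEs (c.S ω) f

/-- Centering at the conditional mean given `S`:  `f − E[f | S]`. -/
def tilt (c : CARPop Ω 𝒮 d) (f : Ω → ℝ) : Ω → ℝ := fun ω => f ω - c.cES f ω

/-- A working model `m(a, s, x)` evaluated along `(S, X)`. -/
def wm (c : CARPop Ω 𝒮 d) (m : Bool → 𝒮 → (Fin d → ℝ) → ℝ) (a : Bool) : Ω → ℝ :=
  fun ω => m a (c.S ω) (c.X ω)

/-- Square-integrability bound for a working model: `E[(m(a,S,X))² | S = s] ≤ C < ∞`. -/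
def WMBound (c : CARPop Ω 𝒮 d) (m : Bool → 𝒮 → (Fin d → ℝ) → ℝ) : Prop :=
  (∀ a : Bool, Measurable (fun ω => m a (c.S ω) (c.X ω))) ∧
    ∃ C : ℝ, ∀ (a : Bool) (s : 𝒮), c.cEs s (fun ω => (m a (c.S ω) (c.X ω)) ^ 2) ≤ C

/-- Influence term `Ξ₁` of the adjusted LATE estimator with working models `mY, mD`. -/
def Xi1 (c : CARPop Ω 𝒮 d) (mY mD : Bool → 𝒮 → (Fin d → ℝ) → ℝ) : Ω → ℝ := fun ω =>
  ((1 - 1 / c.piS (c.S ω)) * c.tilt (c.wm mY true) ω - c.tilt (c.wm mY false) ω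
      + c.tilt c.W ω / c.piS (c.S ω))
    - c.tau * ((1 - 1 / c.piS (c.S ω)) * c.tilt (c.wm mD true) ω
        - c.tilt (c.wm mD false) ω + c.tilt (c.Da true) ω / c.piS (c.S ω))

/-- Influence term `Ξ₀` of the adjusted LATE estimator with working models `mY, mD`. -/
def Xi0 (c : CARPop Ω 𝒮 d) (mY mD : Bool → 𝒮 → (Fin d → ℝ) → ℝ) : Ω → ℝ := fun ω =>
  ((1 / (1 - c.piS (c.S ω)) - 1) * c.tilt (c.wm mY false) ω + c.tilt (c.wm mY true) ω
      - c.tilt c.Z ω / (1 - c.piS (c.S ω)))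
    - c.tau * ((1 / (1 - c.piS (c.S ω)) - 1) * c.tilt (c.wm mD false) ω
        + c.tilt (c.wm mD true) ω - c.tilt (c.Da false) ω / (1 - c.piS (c.S ω)))

/-- Influence term `Ξ₂` (between-strata variation). -/
def Xi2 (c : CARPop Ω 𝒮 d) : Ω → ℝ := fun ω =>
  (c.cES (fun ω' => c.W ω' - c.Z ω') ω - ∫ ω', (c.W ω' - c.Z ω') ∂c.P)
    - c.tau * (c.cES (fun ω' => c.Da true ω' - c.Da false ω') ω
        - ∫ ω', (c.Da true ω' - c.Da false ω') ∂c.P)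

/-- `σ₁² = E[π(S)·Ξ₁²]`. -/
def sigma1Sq (c : CARPop Ω 𝒮 d) (mY mD : Bool → 𝒮 → (Fin d → ℝ) → ℝ) : ℝ :=
  ∫ ω, c.piS (c.S ω) * (c.Xi1 mY mD ω) ^ 2 ∂c.P

/-- `σ₀² = E[(1 − π(S))·Ξ₀²]`. -/
def sigma0Sq (c : CARPop Ω 𝒮 d) (mY mD : Bool → 𝒮 → (Fin d → ℝ) → ℝ) : ℝ :=
  ∫ ω, (1 - c.piS (c.S ω)) * (c.Xi0 mY mD ω) ^ 2 ∂c.P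

/-- `σ₂² = E[Ξ₂²]`. -/
def sigma2Sq (c : CARPop Ω 𝒮 d) : ℝ := ∫ ω, (c.Xi2 ω) ^ 2 ∂c.P

/-- Asymptotic variance `σ² = (σ₁² + σ₀² + σ₂²)/P(D(1) > D(0))²` of the adjusted
LATE estimator with working models `mY, mD`. -/
def sigmaSq (c : CARPop Ω 𝒮 d) (mY mD : Bool → 𝒮 → (Fin d → ℝ) → ℝ) : ℝ :=
  (c.sigma1Sq mY mD + c.sigma0Sq mY mD + c.sigma2Sq) / (c.P c.compliers).toReal ^ 2

/-- The population-level assumptions of the CAR setup (Assumption 1 of the paper). -/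
structure PopAssumptions (c : CARPop Ω 𝒮 d) : Prop where
  prob : IsProbabilityMeasure c.P
  mY1 : Measurable c.Y1
  mY0 : Measurable c.Y0
  mD1 : Measurable c.D1
  mD0 : Measurable c.D0
  mX : Measurable c.X
  mS : Measurable c.S
  d1Bin : ∀ ω, c.D1 ω = 0 ∨ c.D1 ω = 1
  d0Bin : ∀ ω, c.D0 ω = 0 ∨ c.D0 ω = 1
  noDefiers : c.P {ω | c.D1 ω = 0 ∧ c.D0 ω = 1} = 0
  compliersPos : 0 < c.P c.compliers
  strataPos : ∀ s, 0 < c.P (c.stratum s)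
  piRange : ∃ cc : ℝ, 0 < cc ∧ cc < 1 / 2 ∧ ∀ s, cc < c.piS s ∧ c.piS s < 1 - cc
  momentY : ∃ q C : ℝ, 4 ≤ q ∧ ∀ s,
    c.cEs s (fun ω => |c.Y1 ω| ^ q) ≤ C ∧ c.cEs s (fun ω => |c.Y0 ω| ^ q) ≤ C
  intY1sq : Integrable (fun ω => c.Y1 ω ^ 2) c.P
  intY0sq : Integrable (fun ω => c.Y0 ω ^ 2) c.P

section Linear

variable {ι : Type*} [Fintype ι] [DecidableEq ι]

/-- Centered regressor `Ψ̃ₛ = Ψₛ(X) − E[Ψₛ(X) | S = s]`. -/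
def psiTilt (c : CARPop Ω 𝒮 d) (Ψ : 𝒮 → (Fin d → ℝ) → ι → ℝ) (s : 𝒮) : Ω → ι → ℝ :=
  fun ω j => Ψ s (c.X ω) j - c.cEs s (fun ω' => Ψ s (c.X ω') j)

/-- Within-stratum Gram matrix `E[Ψ̃ₛΨ̃ₛᵀ | S = s]`. -/
def gram (c : CARPop Ω 𝒮 d) (Ψ : 𝒮 → (Fin d → ℝ) → ι → ℝ) (s : 𝒮) : Matrix ι ι ℝ :=
  Matrix.of fun i j => c.cEs s (fun ω => c.psiTilt Ψ s ω i * c.psiTilt Ψ s ω j)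

/-- Optimal linear coefficient `θᴸ(a,s) = (E[Ψ̃Ψ̃ᵀ|S=s])⁻¹ E[Ψ̃·Y(D(a)) | S=s]`. -/
def thetaL (c : CARPop Ω 𝒮 d) (Ψ : 𝒮 → (Fin d → ℝ) → ι → ℝ) (a : Bool) (s : 𝒮) : ι → ℝ :=
  Matrix.mulVec (c.gram Ψ s)⁻¹ (fun j => c.cEs s (fun ω => c.psiTilt Ψ s ω j * c.Ya a ω))

/-- Optimal linear coefficient `βᴸ(a,s) = (E[Ψ̃Ψ̃ᵀ|S=s])⁻¹ E[Ψ̃·D(a) | S=s]`. -/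
def betaL (c : CARPop Ω 𝒮 d) (Ψ : 𝒮 → (Fin d → ℝ) → ι → ℝ) (a : Bool) (s : 𝒮) : ι → ℝ :=
  Matrix.mulVec (c.gram Ψ s)⁻¹ (fun j => c.cEs s (fun ω => c.psiTilt Ψ s ω j * c.Da a ω))

/-- Linear working model `x ↦ Ψₛ(x)ᵀ t(a,s)`. -/
def linWM (Ψ : 𝒮 → (Fin d → ℝ) → ι → ℝ) (t : Bool → 𝒮 → ι → ℝ) :
    Bool → 𝒮 → (Fin d → ℝ) → ℝ :=
  fun a s x => ∑ j, Ψ s x j * t a s j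

/-- Asymptotic variance of the LATE estimator with linear adjustments
`μ̄ʸ(a,s,x) = Ψₛ(x)ᵀ t(a,s)` and `μ̄ᴰ(a,s,x) = Ψₛ(x)ᵀ b(a,s)`. -/
def sigmaSqLin (c : CARPop Ω 𝒮 d) (Ψ : 𝒮 → (Fin d → ℝ) → ι → ℝ)
    (t b : Bool → 𝒮 → ι → ℝ) : ℝ :=
  c.sigmaSq (linWM Ψ t) (linWM Ψ b)

/-- Regularity of the regressor `Ψ`: measurability, a conditional moment bound of
order `q > 2`, and eigenvalues of the within-stratum Gram matrices of the centered
regressor bounded away from `0` and `∞`. -/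
def PsiRegular (c : CARPop Ω 𝒮 d) (Ψ : 𝒮 → (Fin d → ℝ) → ι → ℝ) : Prop :=
  (∀ s, Measurable (Ψ s)) ∧
  (∃ q C : ℝ, 2 < q ∧ ∀ s,
      c.cEs s (fun ω => (∑ j, (Ψ (c.S ω) (c.X ω) j) ^ 2) ^ (q / 2)) ≤ C) ∧
  (∃ c' C' : ℝ, 0 < c' ∧ c' ≤ C' ∧ ∀ s, ∀ v : ι → ℝ,
      c' * (∑ j, v j ^ 2) ≤ (∑ j, v j * Matrix.mulVec (c.gram Ψ s) v j) ∧
        (∑ j, v j * Matrix.mulVec (c.gram Ψ s) v j) ≤ C' * (∑ j, v j ^ 2))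

end Linear

end CARPop

namespace CARPop

variable {Ω : Type*} [MeasurableSpace Ω] {𝒮 : Type*} [Fintype 𝒮] [DecidableEq 𝒮]
  [MeasurableSpace 𝒮] {d : ℕ}

/-- Regressor `𝕏 = (Xᵀ, (1{S=s})ₛ)ᵀ` of the TSLS regression. -/
def XX (c : CARPop Ω 𝒮 d) : Ω → (Fin d ⊕ 𝒮) → ℝ := fun ω =>
  Sum.elim (c.X ω) (fun s => if c.S ω = s then 1 else 0)

/-- `E[𝕏𝕏ᵀ]`. -/
def MXX (c : CARPop Ω 𝒮 d) : Matrix (Fin d ⊕ 𝒮) (Fin d ⊕ 𝒮) ℝ :=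
  Matrix.of fun i j => ∫ ω, c.XX ω i * c.XX ω j ∂c.P

/-- TSLS pseudo-true coefficient
`λ* = (E[𝕏𝕏ᵀ])⁻¹ E[𝕏·(π(W − τD(1)) + (1 − π)(Z − τD(0)))]`. -/
def lamStar (c : CARPop Ω 𝒮 d) (pi : ℝ) : (Fin d ⊕ 𝒮) → ℝ :=
  Matrix.mulVec c.MXX⁻¹ (fun i => ∫ ω, c.XX ω i *
    (pi * (c.W ω - c.tau * c.Da true ω) + (1 - pi) * (c.Z ω - c.tau * c.Da false ω)) ∂c.P)

/-- TSLS residual in the treated arm: `W − τD(1) − 𝕏ᵀλ*`. -/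
def eps1 (c : CARPop Ω 𝒮 d) (pi : ℝ) : Ω → ℝ := fun ω =>
  c.W ω - c.tau * c.Da true ω - ∑ i, c.XX ω i * c.lamStar pi i

/-- TSLS residual in the control arm: `Z − τD(0) − 𝕏ᵀλ*`. -/
def eps0 (c : CARPop Ω 𝒮 d) (pi : ℝ) : Ω → ℝ := fun ω =>
  c.Z ω - c.tau * c.Da false ω - ∑ i, c.XX ω i * c.lamStar pi i

/-- Asymptotic variance of the TSLS estimator (homogeneous `π`). -/
def sigmaSqTSLS (c : CARPop Ω 𝒮 d) (pi : ℝ) (γ : 𝒮 → ℝ) : ℝ :=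
  ((∫ ω, (c.eps0 pi ω - c.cES (c.eps0 pi) ω) ^ 2 ∂c.P) / (1 - pi)
    + (∫ ω, (c.eps1 pi ω - c.cES (c.eps1 pi) ω) ^ 2 ∂c.P) / pi
    + (∫ ω, (c.cES (fun ω' => c.W ω' - c.Z ω'
        - c.tau * (c.Da true ω' - c.Da false ω')) ω) ^ 2 ∂c.P)
    + (∫ ω, γ (c.S ω) *
        (c.cES (fun ω' => c.eps1 pi ω' / pi + c.eps0 pi ω' / (1 - pi)) ω) ^ 2 ∂c.P))
    / (∫ ω, (c.Da true ω - c.Da false ω) ∂c.P) ^ 2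

/-- Centered covariate `X̃ₛ = X − E[X | S = s]`. -/
def xTilt (c : CARPop Ω 𝒮 d) (s : 𝒮) : Ω → Fin d → ℝ := fun ω i =>
  c.X ω i - c.cEs s (fun ω' => c.X ω' i)

/-- Within-stratum covariate Gram matrix `E[X̃ₛX̃ₛᵀ | S = s]`. -/
def gramX (c : CARPop Ω 𝒮 d) (s : 𝒮) : Matrix (Fin d) (Fin d) ℝ :=
  Matrix.of fun i j => c.cEs s (fun ω => c.xTilt s ω i * c.xTilt s ω j)

/-- `ν₁ₛ = (E[X̃ₛX̃ₛᵀ|S=s])⁻¹ E[X̃ₛ(W − τD(1))|S=s]`. -/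
def nuYD1 (c : CARPop Ω 𝒮 d) (s : 𝒮) : Fin d → ℝ :=
  Matrix.mulVec (c.gramX s)⁻¹
    (fun i => c.cEs s (fun ω => c.xTilt s ω i * (c.W ω - c.tau * c.Da true ω)))

/-- `ν₀ₛ = (E[X̃ₛX̃ₛᵀ|S=s])⁻¹ E[X̃ₛ(Z − τD(0))|S=s]`. -/
def nuYD0 (c : CARPop Ω 𝒮 d) (s : 𝒮) : Fin d → ℝ :=
  Matrix.mulVec (c.gramX s)⁻¹
    (fun i => c.cEs s (fun ω => c.xTilt s ω i * (c.Z ω - c.tau * c.Da false ω)))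

/-- `ρ(1) = (W − τD(1) − Xᵀν₁ₛ)/π + Xᵀ(ν₁ₛ − ν₀ₛ)`. -/
def rho1 (c : CARPop Ω 𝒮 d) (pi : ℝ) : Ω → ℝ := fun ω =>
  (c.W ω - c.tau * c.Da true ω - ∑ i, c.X ω i * c.nuYD1 (c.S ω) i) / pi
    + ∑ i, c.X ω i * (c.nuYD1 (c.S ω) i - c.nuYD0 (c.S ω) i)

/-- `ρ(0) = (Z − τD(0) − Xᵀν₀ₛ)/(1 − π) − Xᵀ(ν₁ₛ − ν₀ₛ)`. -/
def rho0 (c : CARPop Ω 𝒮 d) (pi : ℝ) : Ω → ℝ := fun ω =>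
  (c.Z ω - c.tau * c.Da false ω - ∑ i, c.X ω i * c.nuYD0 (c.S ω) i) / (1 - pi)
    - ∑ i, c.X ω i * (c.nuYD1 (c.S ω) i - c.nuYD0 (c.S ω) i)

/-- Asymptotic variance of the S estimator of Ansel, Hong and Li (2018). -/
def sigmaSqS (c : CARPop Ω 𝒮 d) (pi : ℝ) : ℝ :=
  ((∫ ω, pi * (c.rho1 pi ω - c.cES (c.rho1 pi) ω) ^ 2 ∂c.P)
    + (∫ ω, (1 - pi) * (c.rho0 pi ω - c.cES (c.rho0 pi) ω) ^ 2 ∂c.P)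
    + (∫ ω, (c.cES (fun ω' => c.W ω' - c.Z ω'
        - c.tau * (c.Da true ω' - c.Da false ω')) ω) ^ 2 ∂c.P))
    / (∫ ω, (c.Da true ω - c.Da false ω) ∂c.P) ^ 2

end CARPop

/-!
Centering within strata turns the TSLS residuals into `Ã − L`, `B̃ − L` and the S-estimator
terms into `(Ã − U₁)/π + (U₁ − U₀)`, `(B̃ − U₀)/(1 − π) − (U₁ − U₀)`, where `Ã, B̃` are the
stratum-centred `W − τD(1)`, `Z − τD(0)`, `U_a = X̃ᵀν_a` and `L = X̃ᵀλ*_X`. By the normal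
equations of the within-stratum regressions, `Ã − U₁` and `B̃ − U₀` are orthogonal to every
`X̃ᵀv(S)`, so after the cross terms vanish the gap between the two variances is
`E[((1 − π)(U₁ − L) + π(U₀ − L))²] / (π(1 − π)) ≥ 0`. The `γ`-term of `σ_TSLS²` is nonnegative
and `σ₂²` is common to both.
-/

open Matrix

section General

variable {Ω : Type*} [MeasurableSpace Ω] {μ : Measure Ω}

theorem integral_dotProduct_const {ι : Type*} [Fintype ι] {F : Ω → ι → ℝ}
    (hF : ∀ i, Integrable (fun ω => F ω i) μ) (w : ι → ℝ) :
    ∫ ω, F ω ⬝ᵥ w ∂μ = (fun i => ∫ ω, F ω i ∂μ) ⬝ᵥ w := by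
  simp only [dotProduct]
  rw [integral_finsetSum _ fun i _ => (hF i).mul_const _]
  simp only [integral_mul_const]

theorem sq_div_add_sq_div_eq {π : ℝ} (hπ0 : π ≠ 0) (hπ1 : 1 - π ≠ 0) (a b u₁ u₀ l : ℝ) :
    (a - l) ^ 2 / π + (b - l) ^ 2 / (1 - π)
      = π * ((a - u₁) / π + (u₁ - u₀)) ^ 2 + (1 - π) * ((b - u₀) / (1 - π) - (u₁ - u₀)) ^ 2
        + ((1 - π) * (u₁ - l) + π * (u₀ - l)) ^ 2 / (π * (1 - π))
        + 2 * ((a - u₁) * (π⁻¹ * (u₁ - l) - (u₁ - u₀)))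
        + 2 * ((b - u₀) * ((1 - π)⁻¹ * (u₀ - l) - (u₀ - u₁))) := by
  field_simp
  ring

theorem integral_sq_add_integral_sq_le_of_orthogonal {π : ℝ} (hπ0 : 0 < π) (hπ1 : π < 1)
    {A B U₁ U₀ L : Ω → ℝ} (hA : MemLp A 2 μ) (hB : MemLp B 2 μ) (hU₁ : MemLp U₁ 2 μ)
    (hU₀ : MemLp U₀ 2 μ) (hL : MemLp L 2 μ)
    (h₁ : ∫ ω, (A ω - U₁ ω) * (π⁻¹ * (U₁ ω - L ω) - (U₁ ω - U₀ ω)) ∂μ = 0)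
    (h₀ : ∫ ω, (B ω - U₀ ω) * ((1 - π)⁻¹ * (U₀ ω - L ω) - (U₀ ω - U₁ ω)) ∂μ = 0) :
    (∫ ω, π * ((A ω - U₁ ω) / π + (U₁ ω - U₀ ω)) ^ 2 ∂μ)
      + ∫ ω, (1 - π) * ((B ω - U₀ ω) / (1 - π) - (U₁ ω - U₀ ω)) ^ 2 ∂μ
      ≤ (∫ ω, (A ω - L ω) ^ 2 ∂μ) / π + (∫ ω, (B ω - L ω) ^ 2 ∂μ) / (1 - π) := by
  have hπ1' : 0 < 1 - π := sub_pos.2 hπ1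
  have memLp_div (f : Ω → ℝ) (hf : MemLp f 2 μ) (r : ℝ) : MemLp (fun ω => f ω / r) 2 μ := by
    simpa only [div_eq_mul_inv] using hf.mul_const r⁻¹
  have iS₁ : Integrable (fun ω => π * ((A ω - U₁ ω) / π + (U₁ ω - U₀ ω)) ^ 2) μ :=
    ((memLp_div _ (hA.sub hU₁) π).add (hU₁.sub hU₀)).integrable_sq.const_mul π
  have iS₀ : Integrable (fun ω => (1 - π) * ((B ω - U₀ ω) / (1 - π) - (U₁ ω - U₀ ω)) ^ 2) μ :=
    ((memLp_div _ (hB.sub hU₀) (1 - π)).sub (hU₁.sub hU₀)).integrable_sq.const_mul (1 - π)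
  have iQ : Integrable
      (fun ω => ((1 - π) * (U₁ ω - L ω) + π * (U₀ ω - L ω)) ^ 2 / (π * (1 - π))) μ :=
    ((((hU₁.sub hL).const_mul (1 - π)).add ((hU₀.sub hL).const_mul π)).integrable_sq).div_const _
  have iR₁ : Integrable (fun ω => (A ω - U₁ ω) * (π⁻¹ * (U₁ ω - L ω) - (U₁ ω - U₀ ω))) μ :=
    (hA.sub hU₁).integrable_mul (((hU₁.sub hL).const_mul π⁻¹).sub (hU₁.sub hU₀))
  have iR₀ : Integrable
      (fun ω => (B ω - U₀ ω) * ((1 - π)⁻¹ * (U₀ ω - L ω) - (U₀ ω - U₁ ω))) μ :=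
    (hB.sub hU₀).integrable_mul (((hU₀.sub hL).const_mul (1 - π)⁻¹).sub (hU₀.sub hU₁))
  have iT₁ : Integrable (fun ω => (A ω - L ω) ^ 2 / π) μ := (hA.sub hL).integrable_sq.div_const _
  have iT₀ : Integrable (fun ω => (B ω - L ω) ^ 2 / (1 - π)) μ :=
    (hB.sub hL).integrable_sq.div_const _
  have hQ : 0 ≤ ∫ ω, ((1 - π) * (U₁ ω - L ω) + π * (U₀ ω - L ω)) ^ 2 / (π * (1 - π)) ∂μ :=
    integral_nonneg fun ω => by positivity
  have hT : ∫ ω, ((A ω - L ω) ^ 2 / π + (B ω - L ω) ^ 2 / (1 - π)) ∂μ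
      = ∫ ω, (π * ((A ω - U₁ ω) / π + (U₁ ω - U₀ ω)) ^ 2
          + (1 - π) * ((B ω - U₀ ω) / (1 - π) - (U₁ ω - U₀ ω)) ^ 2
          + ((1 - π) * (U₁ ω - L ω) + π * (U₀ ω - L ω)) ^ 2 / (π * (1 - π))
          + 2 * ((A ω - U₁ ω) * (π⁻¹ * (U₁ ω - L ω) - (U₁ ω - U₀ ω)))
          + 2 * ((B ω - U₀ ω) * ((1 - π)⁻¹ * (U₀ ω - L ω) - (U₀ ω - U₁ ω)))) ∂μ :=
    integral_congr_ae (ae_of_all _ fun ω =>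
      sq_div_add_sq_div_eq hπ0.ne' hπ1'.ne' (A ω) (B ω) (U₁ ω) (U₀ ω) (L ω))
  rw [integral_add iT₁ iT₀, integral_div, integral_div,
    integral_add (((iS₁.fun_add iS₀).fun_add iQ).fun_add (iR₁.const_mul 2)) (iR₀.const_mul 2),
    integral_add ((iS₁.fun_add iS₀).fun_add iQ) (iR₁.const_mul 2),
    integral_add (iS₁.fun_add iS₀) iQ, integral_add iS₁ iS₀, integral_const_mul (2 : ℝ),
    integral_const_mul (2 : ℝ), h₁, h₀] at hT
  linarith

end General

namespace CARPop

section Strata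

variable {Ω : Type*} [MeasurableSpace Ω] {𝒮 : Type*} [MeasurableSpace 𝒮] {d : ℕ}
  {c : CARPop Ω 𝒮 d}

theorem cEs_eq_integral_cond (s : 𝒮) (f : Ω → ℝ) :
    c.cEs s f = ∫ ω, f ω ∂c.P[|c.stratum s] := by
  rw [cEs, ProbabilityTheory.cond, integral_smul_measure, ENNReal.toReal_inv, smul_eq_mul,
    div_eq_inv_mul]

theorem isProbabilityMeasure_cond_stratum (hc : c.PopAssumptions) (s : 𝒮) :
    IsProbabilityMeasure c.P[|c.stratum s] :=
  have := hc.prob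
  cond_isProbabilityMeasure (hc.strataPos s).ne'

theorem integrable_cond_stratum (hc : c.PopAssumptions) {f : Ω → ℝ} (hf : Integrable f c.P)
    (s : 𝒮) : Integrable f c.P[|c.stratum s] :=
  hf.restrict.smul_measure (ENNReal.inv_ne_top.2 (hc.strataPos s).ne')

variable [MeasurableSingletonClass 𝒮]

theorem measurableSet_stratum (hc : c.PopAssumptions) (s : 𝒮) : MeasurableSet (c.stratum s) :=
  hc.mS (measurableSet_singleton s)

theorem cEs_congr (hc : c.PopAssumptions) {s : 𝒮} {f g : Ω → ℝ}
    (h : ∀ ω, c.S ω = s → f ω = g ω) : c.cEs s f = c.cEs s g := by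
  simp only [cEs_eq_integral_cond]
  exact integral_congr_ae ((ae_cond_mem (measurableSet_stratum hc s)).mono h)

variable [Fintype 𝒮]

theorem integral_eq_sum_cEs (hc : c.PopAssumptions) {f : Ω → ℝ} (hf : Integrable f c.P) :
    ∫ ω, f ω ∂c.P = ∑ s, (c.P (c.stratum s)).toReal * c.cEs s f := by
  have := hc.prob
  have hsum : ∑ s, c.P (c.stratum s) • c.P[|c.stratum s] = c.P :=
    sum_meas_smul_cond_fiber hc.mS c.P
  conv_lhs => rw [← hsum]
  rw [integral_finsetSum_measure fun s _ =>
    (integrable_cond_stratum hc hf s).smul_measure (measure_ne_top _ _)]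
  simp only [integral_smul_measure, smul_eq_mul, cEs_eq_integral_cond]

end Strata

section SquareIntegrable

variable {Ω : Type*} [MeasurableSpace Ω] {𝒮 : Type*} [MeasurableSpace 𝒮] {d : ℕ}
  {c : CARPop Ω 𝒮 d}

def yd (c : CARPop Ω 𝒮 d) (a : Bool) : Ω → ℝ := fun ω => c.Ya a ω - c.tau * c.Da a ω

def xTiltDot (c : CARPop Ω 𝒮 d) (v : 𝒮 → Fin d → ℝ) : Ω → ℝ :=
  fun ω => c.xTilt (c.S ω) ω ⬝ᵥ v (c.S ω)

theorem xTiltDot_sub (v w : 𝒮 → Fin d → ℝ) (ω : Ω) :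
    c.xTiltDot (v - w) ω = c.xTiltDot v ω - c.xTiltDot w ω :=
  dotProduct_sub _ _ _

theorem xTiltDot_smul (a : ℝ) (v : 𝒮 → Fin d → ℝ) (ω : Ω) :
    c.xTiltDot (a • v) ω = a * c.xTiltDot v ω := by
  simp only [xTiltDot, Pi.smul_apply, dotProduct_smul, smul_eq_mul]

theorem XX_dotProduct [Fintype 𝒮] [DecidableEq 𝒮] (ω : Ω) (lam : Fin d ⊕ 𝒮 → ℝ) :
    ∑ i, c.XX ω i * lam i = c.X ω ⬝ᵥ (fun i => lam (Sum.inl i)) + lam (Sum.inr (c.S ω)) := by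
  simp [XX, Fintype.sum_sum_type, dotProduct, ite_mul]

theorem memLp_Da (hc : c.PopAssumptions) (a : Bool) (p : ENNReal) : MemLp (c.Da a) p c.P := by
  have := hc.prob
  refine MemLp.of_bound ?_ 1 (ae_of_all _ fun ω => ?_)
  · cases a
    exacts [hc.mD0.aestronglyMeasurable, hc.mD1.aestronglyMeasurable]
  · cases a
    · rcases hc.d0Bin ω with h | h <;> simp [Da, h]
    · rcases hc.d1Bin ω with h | h <;> simp [Da, h]

theorem memLp_yd (hc : c.PopAssumptions) (a : Bool) : MemLp (c.yd a) 2 c.P := by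
  have := hc.prob
  have hY1 : MemLp c.Y1 2 c.P :=
    (memLp_two_iff_integrable_sq hc.mY1.aestronglyMeasurable).2 hc.intY1sq
  have hY0 : MemLp c.Y0 2 c.P :=
    (memLp_two_iff_integrable_sq hc.mY0.aestronglyMeasurable).2 hc.intY0sq
  have hYa : MemLp (c.Ya a) 2 c.P :=
    ((memLp_Da hc a ⊤).mul' hY1).add (((memLp_const 1).sub (memLp_Da hc a ⊤)).mul' hY0)
  exact hYa.sub ((memLp_Da hc a 2).const_mul c.tau)

theorem memLp_X_apply (hc : c.PopAssumptions)
    (hX2 : Integrable (fun ω => ∑ i, (c.X ω i) ^ 2) c.P) (i : Fin d) :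
    MemLp (fun ω => c.X ω i) 2 c.P := by
  have hXi : Measurable fun ω => c.X ω i := (measurable_pi_apply i).comp hc.mX
  refine (memLp_two_iff_integrable_sq hXi.aestronglyMeasurable).2 <|
    hX2.mono (hXi.pow_const 2).aestronglyMeasurable (ae_of_all _ fun ω => ?_)
  rw [Real.norm_eq_abs, Real.norm_eq_abs, abs_pow, sq_abs,
    abs_of_nonneg (sum_nonneg fun j _ => sq_nonneg (c.X ω j))]
  exact single_le_sum (f := fun j => c.X ω j ^ 2) (fun j _ => sq_nonneg _) (mem_univ i)

theorem memLp_xTilt (hc : c.PopAssumptions)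
    (hX2 : Integrable (fun ω => ∑ i, (c.X ω i) ^ 2) c.P) (s : 𝒮) (i : Fin d) :
    MemLp (fun ω => c.xTilt s ω i) 2 c.P :=
  have := hc.prob
  (memLp_X_apply hc hX2 i).sub (memLp_const _)

variable [Fintype 𝒮] [MeasurableSingletonClass 𝒮]

theorem memLp_comp_S (hc : c.PopAssumptions) (g : 𝒮 → ℝ) (p : ENNReal) :
    MemLp (fun ω => g (c.S ω)) p c.P := by
  have := hc.prob
  exact MemLp.of_bound ((measurable_of_finite g).comp hc.mS).aestronglyMeasurable
    (∑ s, ‖g s‖) (ae_of_all _ fun ω =>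
      single_le_sum (f := fun s => ‖g s‖) (fun s _ => norm_nonneg _) (mem_univ _))

theorem memLp_tilt (hc : c.PopAssumptions) {f : Ω → ℝ} (hf : MemLp f 2 c.P) :
    MemLp (c.tilt f) 2 c.P :=
  hf.sub (memLp_comp_S hc (fun s => c.cEs s f) 2)

theorem memLp_xTiltDot (hc : c.PopAssumptions)
    (hX2 : Integrable (fun ω => ∑ i, (c.X ω i) ^ 2) c.P) (v : 𝒮 → Fin d → ℝ) :
    MemLp (c.xTiltDot v) 2 c.P := by
  have hsum : c.xTiltDot v = fun ω => ∑ i,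
      (c.X ω i * v (c.S ω) i - c.cEs (c.S ω) (fun ω' => c.X ω' i) * v (c.S ω) i) := by
    ext ω
    simp only [xTiltDot, xTilt, dotProduct, sub_mul]
  rw [hsum]
  exact memLp_finsetSum _ fun i _ =>
    ((memLp_comp_S hc (fun s => v s i) ⊤).mul' (memLp_X_apply hc hX2 i)).sub
      (memLp_comp_S hc (fun s => c.cEs s (fun ω' => c.X ω' i) * v s i) 2)

end SquareIntegrable

section Centering

variable {Ω : Type*} [MeasurableSpace Ω] {𝒮 : Type*} [MeasurableSpace 𝒮]
  [MeasurableSingletonClass 𝒮] {d : ℕ} {c : CARPop Ω 𝒮 d}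

theorem cEs_affine (hc : c.PopAssumptions)
    (hX2 : Integrable (fun ω => ∑ i, (c.X ω i) ^ 2) c.P) (s : 𝒮) {f : Ω → ℝ}
    (hf : Integrable f c.P) (a : ℝ) (v : 𝒮 → Fin d → ℝ) (g : 𝒮 → ℝ) :
    c.cEs s (fun ω => a * f ω + c.X ω ⬝ᵥ v (c.S ω) + g (c.S ω))
      = a * c.cEs s f + (fun i => c.cEs s fun ω => c.X ω i) ⬝ᵥ v s + g s := by
  have := hc.prob
  have := isProbabilityMeasure_cond_stratum hc s
  have hX : ∀ i, Integrable (fun ω => c.X ω i) c.P[|c.stratum s] := fun i =>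
    integrable_cond_stratum hc ((memLp_X_apply hc hX2 i).integrable one_le_two) s
  have haf : Integrable (fun ω => a * f ω) c.P[|c.stratum s] :=
    (integrable_cond_stratum hc hf s).const_mul a
  have hXv : Integrable (fun ω => c.X ω ⬝ᵥ v s) c.P[|c.stratum s] :=
    integrable_finsetSum _ fun i _ => (hX i).mul_const _
  rw [cEs_congr hc (g := fun ω => a * f ω + c.X ω ⬝ᵥ v s + g s) fun ω hω => by rw [hω]]
  simp only [cEs_eq_integral_cond]
  rw [integral_add (haf.fun_add hXv) (integrable_const _), integral_add haf hXv,
    integral_const_mul, integral_dotProduct_const hX, integral_const, probReal_univ, one_smul]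

theorem tilt_affine (hc : c.PopAssumptions)
    (hX2 : Integrable (fun ω => ∑ i, (c.X ω i) ^ 2) c.P) {f : Ω → ℝ}
    (hf : Integrable f c.P) (a : ℝ) (v : 𝒮 → Fin d → ℝ) (g : 𝒮 → ℝ) (ω : Ω) :
    c.tilt (fun ω => a * f ω + c.X ω ⬝ᵥ v (c.S ω) + g (c.S ω)) ω
      = a * c.tilt f ω + c.xTiltDot v ω := by
  have hxTilt : c.xTilt (c.S ω) ω = c.X ω - fun i => c.cEs (c.S ω) fun ω => c.X ω i := rfl
  simp only [tilt, cES, cEs_affine hc hX2 _ hf, xTiltDot, hxTilt, sub_dotProduct]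
  ring

theorem tilt_rho1 (hc : c.PopAssumptions)
    (hX2 : Integrable (fun ω => ∑ i, (c.X ω i) ^ 2) c.P) (pi : ℝ) (ω : Ω) :
    c.rho1 pi ω - c.cES (c.rho1 pi) ω
      = (c.tilt (c.yd true) ω - c.xTiltDot c.nuYD1 ω) / pi
        + (c.xTiltDot c.nuYD1 ω - c.xTiltDot c.nuYD0 ω) := by
  have := hc.prob
  have hrho : c.rho1 pi = fun ω => pi⁻¹ * c.yd true ω
      + c.X ω ⬝ᵥ ((1 - pi⁻¹) • c.nuYD1 - c.nuYD0) (c.S ω) + 0 := by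
    funext ω
    show (c.yd true ω - c.X ω ⬝ᵥ c.nuYD1 (c.S ω)) / pi
      + c.X ω ⬝ᵥ (c.nuYD1 (c.S ω) - c.nuYD0 (c.S ω)) = _
    simp only [Pi.sub_apply, Pi.smul_apply, dotProduct_sub, dotProduct_smul, smul_eq_mul]
    ring
  show c.tilt (c.rho1 pi) ω = _
  rw [hrho]
  refine (tilt_affine hc hX2 ((memLp_yd hc true).integrable one_le_two) pi⁻¹
    ((1 - pi⁻¹) • c.nuYD1 - c.nuYD0) (fun _ => 0) ω).trans ?_
  rw [xTiltDot_sub, xTiltDot_smul]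
  ring

theorem tilt_rho0 (hc : c.PopAssumptions)
    (hX2 : Integrable (fun ω => ∑ i, (c.X ω i) ^ 2) c.P) (pi : ℝ) (ω : Ω) :
    c.rho0 pi ω - c.cES (c.rho0 pi) ω
      = (c.tilt (c.yd false) ω - c.xTiltDot c.nuYD0 ω) / (1 - pi)
        - (c.xTiltDot c.nuYD1 ω - c.xTiltDot c.nuYD0 ω) := by
  have := hc.prob
  have hrho : c.rho0 pi = fun ω => (1 - pi)⁻¹ * c.yd false ω
      + c.X ω ⬝ᵥ ((1 - (1 - pi)⁻¹) • c.nuYD0 - c.nuYD1) (c.S ω) + 0 := by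
    funext ω
    show (c.yd false ω - c.X ω ⬝ᵥ c.nuYD0 (c.S ω)) / (1 - pi)
      - c.X ω ⬝ᵥ (c.nuYD1 (c.S ω) - c.nuYD0 (c.S ω)) = _
    simp only [Pi.sub_apply, Pi.smul_apply, dotProduct_sub, dotProduct_smul, smul_eq_mul]
    ring
  show c.tilt (c.rho0 pi) ω = _
  rw [hrho]
  refine (tilt_affine hc hX2 ((memLp_yd hc false).integrable one_le_two) (1 - pi)⁻¹
    ((1 - (1 - pi)⁻¹) • c.nuYD0 - c.nuYD1) (fun _ => 0) ω).trans ?_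
  rw [xTiltDot_sub, xTiltDot_smul]
  ring

variable [Fintype 𝒮] [DecidableEq 𝒮]

theorem tilt_sub_XX_dotProduct (hc : c.PopAssumptions)
    (hX2 : Integrable (fun ω => ∑ i, (c.X ω i) ^ 2) c.P) {f : Ω → ℝ}
    (hf : Integrable f c.P) (lam : Fin d ⊕ 𝒮 → ℝ) (ω : Ω) :
    c.tilt (fun ω => f ω - ∑ i, c.XX ω i * lam i) ω
      = c.tilt f ω - c.xTiltDot (fun _ i => lam (Sum.inl i)) ω := by
  have hf' : (fun ω => f ω - ∑ i, c.XX ω i * lam i) = fun ω => 1 * f ω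
      + c.X ω ⬝ᵥ ((-1 : ℝ) • fun _ i => lam (Sum.inl i)) (c.S ω)
      + -lam (Sum.inr (c.S ω)) := by
    funext ω
    simp only [XX_dotProduct, Pi.smul_apply, dotProduct_smul, smul_eq_mul]
    ring
  rw [hf']
  refine (tilt_affine hc hX2 hf 1 ((-1 : ℝ) • fun _ i => lam (Sum.inl i))
    (fun s => -lam (Sum.inr s)) ω).trans ?_
  rw [xTiltDot_smul]
  ring

theorem tilt_eps1 (hc : c.PopAssumptions)
    (hX2 : Integrable (fun ω => ∑ i, (c.X ω i) ^ 2) c.P) (pi : ℝ) (ω : Ω) :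
    c.eps1 pi ω - c.cES (c.eps1 pi) ω
      = c.tilt (c.yd true) ω - c.xTiltDot (fun _ i => c.lamStar pi (Sum.inl i)) ω :=
  have := hc.prob
  tilt_sub_XX_dotProduct hc hX2 ((memLp_yd hc true).integrable one_le_two) _ ω

theorem tilt_eps0 (hc : c.PopAssumptions)
    (hX2 : Integrable (fun ω => ∑ i, (c.X ω i) ^ 2) c.P) (pi : ℝ) (ω : Ω) :
    c.eps0 pi ω - c.cES (c.eps0 pi) ω
      = c.tilt (c.yd false) ω - c.xTiltDot (fun _ i => c.lamStar pi (Sum.inl i)) ω :=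
  have := hc.prob
  tilt_sub_XX_dotProduct hc hX2 ((memLp_yd hc false).integrable one_le_two) _ ω

end Centering

section Projection

variable {Ω : Type*} [MeasurableSpace Ω] {𝒮 : Type*} [MeasurableSpace 𝒮] {d : ℕ}
  {c : CARPop Ω 𝒮 d}

theorem cEs_xTilt_mul_residual_eq_zero (hc : c.PopAssumptions)
    (hX2 : Integrable (fun ω => ∑ i, (c.X ω i) ^ 2) c.P) {h : Ω → ℝ} (hh : MemLp h 2 c.P)
    {s : 𝒮} {ν : Fin d → ℝ}
    (hν : c.gramX s *ᵥ ν = fun i => c.cEs s fun ω => c.xTilt s ω i * h ω) (i : Fin d) :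
    c.cEs s (fun ω => c.xTilt s ω i * (h ω - c.cEs s h - c.xTilt s ω ⬝ᵥ ν)) = 0 := by
  have := hc.prob
  have := isProbabilityMeasure_cond_stratum hc s
  have hx := memLp_xTilt hc hX2 s
  have hxh : Integrable (fun ω => c.xTilt s ω i * h ω) c.P[|c.stratum s] :=
    integrable_cond_stratum hc ((hx i).integrable_mul hh) s
  have hxm : Integrable (fun ω => c.cEs s h * c.xTilt s ω i) c.P[|c.stratum s] :=
    (integrable_cond_stratum hc ((hx i).integrable one_le_two) s).const_mul _
  have hxx : ∀ j, Integrable (fun ω => c.xTilt s ω i * c.xTilt s ω j * ν j)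
      c.P[|c.stratum s] := fun j =>
    (integrable_cond_stratum hc ((hx i).integrable_mul (hx j)) s).mul_const _
  have hmean : ∫ ω, c.xTilt s ω i ∂c.P[|c.stratum s] = 0 := by
    show ∫ ω, (c.X ω i - c.cEs s fun ω => c.X ω i) ∂c.P[|c.stratum s] = 0
    rw [integral_sub (integrable_cond_stratum hc ((memLp_X_apply hc hX2 i).integrable
      one_le_two) s) (integrable_const _), integral_const, probReal_univ, one_smul,
      cEs_eq_integral_cond, sub_self]
  have hnormal := congrFun hν i
  simp only [mulVec, dotProduct, gramX, of_apply, cEs_eq_integral_cond] at hnormal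
  have hexpand : (fun ω => c.xTilt s ω i * (h ω - c.cEs s h - c.xTilt s ω ⬝ᵥ ν))
      = fun ω => c.xTilt s ω i * h ω - c.cEs s h * c.xTilt s ω i
        - ∑ j, c.xTilt s ω i * c.xTilt s ω j * ν j := by
    funext ω
    simp only [dotProduct, mul_sub, Finset.mul_sum, mul_assoc]
    ring
  rw [hexpand, cEs_eq_integral_cond,
    integral_sub (hxh.sub' hxm) (integrable_finsetSum _ fun j _ => hxx j), integral_sub hxh hxm,
    integral_const_mul, hmean, integral_finsetSum _ fun j _ => hxx j]
  simp only [integral_mul_const]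
  linarith

theorem gramX_mulVec_nuYD1 {s : 𝒮} (hgram : IsUnit (c.gramX s).det) :
    c.gramX s *ᵥ c.nuYD1 s = fun i => c.cEs s fun ω => c.xTilt s ω i * c.yd true ω := by
  rw [nuYD1, mulVec_mulVec, mul_nonsing_inv _ hgram, one_mulVec]
  rfl

theorem gramX_mulVec_nuYD0 {s : 𝒮} (hgram : IsUnit (c.gramX s).det) :
    c.gramX s *ᵥ c.nuYD0 s = fun i => c.cEs s fun ω => c.xTilt s ω i * c.yd false ω := by
  rw [nuYD0, mulVec_mulVec, mul_nonsing_inv _ hgram, one_mulVec]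
  rfl

variable [Fintype 𝒮] [MeasurableSingletonClass 𝒮]

theorem integral_residual_mul_xTiltDot_eq_zero (hc : c.PopAssumptions)
    (hX2 : Integrable (fun ω => ∑ i, (c.X ω i) ^ 2) c.P) {h : Ω → ℝ} (hh : MemLp h 2 c.P)
    {ν : 𝒮 → Fin d → ℝ}
    (hν : ∀ s, c.gramX s *ᵥ ν s = fun i => c.cEs s fun ω => c.xTilt s ω i * h ω)
    (v : 𝒮 → Fin d → ℝ) :
    ∫ ω, (c.tilt h ω - c.xTiltDot ν ω) * c.xTiltDot v ω ∂c.P = 0 := by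
  have := hc.prob
  have hint : Integrable (fun ω => (c.tilt h ω - c.xTiltDot ν ω) * c.xTiltDot v ω) c.P :=
    ((memLp_tilt hc hh).sub (memLp_xTiltDot hc hX2 ν)).integrable_mul (memLp_xTiltDot hc hX2 v)
  rw [integral_eq_sum_cEs hc hint]
  refine sum_eq_zero fun s _ => ?_
  have hres : c.cEs s (fun ω => (c.tilt h ω - c.xTiltDot ν ω) * c.xTiltDot v ω)
      = c.cEs s fun ω =>
          ∑ i, v s i * (c.xTilt s ω i * (h ω - c.cEs s h - c.xTilt s ω ⬝ᵥ ν s)) := by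
    refine cEs_congr hc fun ω hω => ?_
    subst hω
    show (h ω - c.cEs (c.S ω) h - c.xTilt (c.S ω) ω ⬝ᵥ ν (c.S ω))
      * ∑ i, c.xTilt (c.S ω) ω i * v (c.S ω) i = _
    rw [Finset.mul_sum]
    exact sum_congr rfl fun i _ => by ring
  have hR : MemLp (fun ω => h ω - c.cEs s h - c.xTilt s ω ⬝ᵥ ν s) 2 c.P :=
    (hh.sub (memLp_const _)).sub
      (memLp_finsetSum _ fun j _ => (memLp_xTilt hc hX2 s j).mul_const _)
  rw [hres, cEs_eq_integral_cond, integral_finsetSum _ fun i _ => ?_]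
  · simp only [integral_const_mul, ← cEs_eq_integral_cond,
      cEs_xTilt_mul_residual_eq_zero hc hX2 hh (hν s), mul_zero, sum_const_zero]
  · exact (integrable_cond_stratum hc ((memLp_xTilt hc hX2 s i).integrable_mul hR) s).const_mul _

end Projection

end CARPop

open CARPop in
theorem stmt19_general {Ω : Type*} [MeasurableSpace Ω] {𝒮 : Type*} [Fintype 𝒮] [DecidableEq 𝒮]
    [MeasurableSpace 𝒮] [MeasurableSingletonClass 𝒮] {d : ℕ}
    (c : CARPop Ω 𝒮 d) (hc : PopAssumptions c)
    (pi : ℝ) (hpi0 : 0 < pi) (hpi1 : pi < 1)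
    (hX2 : Integrable (fun ω => ∑ i, (c.X ω i) ^ 2) c.P)
    (hgramX : ∀ s, IsUnit (c.gramX s).det)
    (γ : 𝒮 → ℝ) (hγ : ∀ s, 0 ≤ γ s ∧ γ s ≤ pi * (1 - pi)) :
    c.sigmaSqS pi ≤ c.sigmaSqTSLS pi γ := by
  have := hc.prob
  set lamX : 𝒮 → Fin d → ℝ := fun _ i => c.lamStar pi (Sum.inl i)
  have h₁ := integral_residual_mul_xTiltDot_eq_zero hc hX2 (memLp_yd hc true)
    (fun s => gramX_mulVec_nuYD1 (hgramX s)) (pi⁻¹ • (c.nuYD1 - lamX) - (c.nuYD1 - c.nuYD0))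
  have h₀ := integral_residual_mul_xTiltDot_eq_zero hc hX2 (memLp_yd hc false)
    (fun s => gramX_mulVec_nuYD0 (hgramX s))
    ((1 - pi)⁻¹ • (c.nuYD0 - lamX) - (c.nuYD0 - c.nuYD1))
  simp only [xTiltDot_sub, xTiltDot_smul] at h₁ h₀
  have hS := integral_sq_add_integral_sq_le_of_orthogonal hpi0 hpi1
    (memLp_tilt hc (memLp_yd hc true)) (memLp_tilt hc (memLp_yd hc false))
    (memLp_xTiltDot hc hX2 c.nuYD1) (memLp_xTiltDot hc hX2 c.nuYD0)
    (memLp_xTiltDot hc hX2 lamX) h₁ h₀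
  have hγS : 0 ≤ ∫ ω, γ (c.S ω)
      * (c.cES (fun ω' => c.eps1 pi ω' / pi + c.eps0 pi ω' / (1 - pi)) ω) ^ 2 ∂c.P :=
    integral_nonneg fun ω => mul_nonneg (hγ _).1 (sq_nonneg _)
  unfold sigmaSqS sigmaSqTSLS
  gcongr ?_ / _
  simp only [tilt_rho1 hc hX2, tilt_rho0 hc hX2, tilt_eps1 hc hX2, tilt_eps0 hc hX2]
  linarith

open CARPop in
/-- Under a homogeneous assignment probability `π`, the asymptotic
variance of the S estimator of Ansel, Hong and Li (2018) is weakly smaller than that of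
the TSLS estimator with covariates and strata fixed effects: `σ_S² ≤ σ_TSLS²`. -/
theorem stmt19 {Ω : Type*} [MeasurableSpace Ω] {𝒮 : Type*} [Fintype 𝒮] [DecidableEq 𝒮]
    [MeasurableSpace 𝒮] [MeasurableSingletonClass 𝒮] {d : ℕ}
    (c : CARPop Ω 𝒮 d) (hc : PopAssumptions c)
    (pi : ℝ) (hpi0 : 0 < pi) (hpi1 : pi < 1) (hpiS : ∀ s, c.piS s = pi)
    (hX2 : Integrable (fun ω => ∑ i, (c.X ω i) ^ 2) c.P)
    (hMXX : IsUnit c.MXX.det)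
    (hgramX : ∀ s, IsUnit (c.gramX s).det)
    (γ : 𝒮 → ℝ) (hγ : ∀ s, 0 ≤ γ s ∧ γ s ≤ pi * (1 - pi)) :
    c.sigmaSqS pi ≤ c.sigmaSqTSLS pi γ :=
  stmt19_general c hc pi hpi0 hpi1 hX2 hgramX γ hγ
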